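/- arXiv:math/0612090 — 2 statements merged into one kernel-verified Lean document; each statement's English description precedes it below -/
import Mathlib

section
/- For every positive integer k and variables X_1,...,X_k, in the group algebra Q[S(k)] one has X_1·(X_2 - J_2)···(X_k - J_k) = (-1)^k Σ_{σ∈S(k)} (∏_{c∈C(σ)} (-X_{min(c)})) σ, where C(σ) is the set of cycles (orbits) of σ on {1,...,k}. -/
/-!
Induct on the number of factors. With 0-based indices, the product of the first `n` factors is
`(-1)^n` times the sum, over the permutations `σ` fixing every point `≥ n`, of `σ` weighted by
`∏ (-X_i)` over the points `i < n` that are minimal in their `σ`-cycle. Every permutation fixing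
all points `> N` is uniquely `σ * (j N)` with `σ` fixing all points `≥ N` and `j ≤ N`. Multiplying
by `X_N - J_N`, the term `X_N` keeps `σ` and adds the fixed point `N` as a new cycle minimum, while
for `j < N` the term `σ * (j N)` inserts `N` into the cycle of `j` right after `j`, which leaves the
cycle minima below `N` unchanged and does not make `N` one.
-/

open Equiv Equiv.Perm

/-- The set of cycles (orbits, including fixed points) of a permutation of `Fin k`,
as the quotient of `Fin k` by the `SameCycle` relation. -/
def PermCycles {k : ℕ} (σ : Equiv.Perm (Fin k)) : Type :=
  Quotient (Equiv.Perm.SameCycle.setoid σ)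

instance {k : ℕ} (σ : Equiv.Perm (Fin k)) : DecidableEq (PermCycles σ) :=
  @Quotient.decidableEq _ (Equiv.Perm.SameCycle.setoid σ)
    (fun x y => (inferInstance : Decidable (σ.SameCycle x y)))

instance {k : ℕ} (σ : Equiv.Perm (Fin k)) : Fintype (PermCycles σ) :=
  Fintype.ofSurjective (fun a => Quotient.mk (Equiv.Perm.SameCycle.setoid σ) a)
    (fun c => c.exists_rep)

/-- The cycle of `σ` containing `a`. -/
def cycleMk {k : ℕ} (σ : Equiv.Perm (Fin k)) (a : Fin k) : PermCycles σ :=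
  Quotient.mk (Equiv.Perm.SameCycle.setoid σ) a

/-- The elements of a cycle `c` of `σ`, as a `Finset`. -/
def cycleElems {k : ℕ} (σ : Equiv.Perm (Fin k)) (c : PermCycles σ) : Finset (Fin k) :=
  Finset.univ.filter (fun a => cycleMk σ a = c)

lemma cycleElems_nonempty {k : ℕ} (σ : Equiv.Perm (Fin k)) (c : PermCycles σ) :
    (cycleElems σ c).Nonempty := by
  obtain ⟨a, ha⟩ := c.exists_rep
  exact ⟨a, by
    show a ∈ Finset.univ.filter (fun a => cycleMk σ a = c)
    exact Finset.mem_filter.mpr ⟨Finset.mem_univ _, ha⟩⟩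

/-- The minimal element of a cycle of `σ`. -/
def cycMin {k : ℕ} (σ : Equiv.Perm (Fin k)) (c : PermCycles σ) : Fin k :=
  (cycleElems σ c).min' (cycleElems_nonempty σ c)

/-- The number of cycles (orbits, including fixed points) of `σ`. -/
def cycleCount {k : ℕ} (σ : Equiv.Perm (Fin k)) : ℕ :=
  Fintype.card (PermCycles σ)

/-- The maximum of `φ` over the cycle `c`. -/
def cycMaxVal {k m : ℕ} (σ : Equiv.Perm (Fin k)) (φ : Fin k → Fin m) (c : PermCycles σ) :
    Fin m :=
  ((cycleElems σ c).image φ).max' ((cycleElems_nonempty σ c).image φ)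

/-- The Jucys–Murphy element `J_i = (1 i) + (2 i) + ⋯ + (i-1 i)` in the group algebra
of `S(k)` with coefficients in a commutative ring `R` (so `J_1 = 0`). -/
noncomputable def JM {k : ℕ} (R : Type*) [CommRing R] (i : Fin k) :
    MonoidAlgebra R (Equiv.Perm (Fin k)) :=
  ∑ j ∈ Finset.univ.filter (· < i), MonoidAlgebra.of R (Equiv.Perm (Fin k)) (Equiv.swap j i)

open Finset

namespace Equiv.Perm

section SameCycle

variable {α : Type*}

theorem SameCycle.rel_of_forall_rel_apply [Finite α] {σ : Perm α} {r : α → α → Prop}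
    (refl : ∀ a, r a a) (trans : ∀ a b c, r a b → r b c → r a c) (step : ∀ a, r a (σ a))
    {x y : α} (h : σ.SameCycle x y) : r x y := by
  obtain ⟨n, rfl⟩ := h.exists_nat_pow_eq
  clear h
  induction n with
  | zero => exact refl x
  | succ n ih => exact trans _ _ _ ih (by rw [pow_succ', mul_apply]; exact step _)

variable [DecidableEq α] [Finite α] {σ : Perm α} {j N : α}

theorem SameCycle.mul_swap_of_apply_eq_self (hN : σ N = N) {x y : α} (h : σ.SameCycle x y) :
    (σ * swap j N).SameCycle x y := by
  refine h.rel_of_forall_rel_apply (fun _ => .rfl) (fun _ _ _ => .trans) fun a => ?_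
  by_cases haj : a = j
  · subst haj
    rw [show σ a = (σ * swap a N) ((σ * swap a N) a) by simp [hN], sameCycle_apply_right,
      sameCycle_apply_right]
  by_cases haN : a = N
  · subst haN; rw [hN]
  · rw [show σ a = (σ * swap j N) a by simp [swap_apply_of_ne_of_ne haj haN],
      sameCycle_apply_right]

theorem SameCycle.of_mul_swap_of_apply_eq_self (hN : σ N = N) {x y : α} (hx : x ≠ N)
    (hy : y ≠ N) (h : (σ * swap j N).SameCycle x y) : σ.SameCycle x y := by
  -- collapsing `N` onto `j` turns each step of `σ * swap j N` into a step of `σ` or a non-move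
  let g : α → α := fun a => if a = N then j else a
  have key : σ.SameCycle (g x) (g y) := by
    refine h.rel_of_forall_rel_apply (r := fun a b => σ.SameCycle (g a) (g b)) (fun _ => .rfl)
      (fun _ _ _ => .trans) fun a => ?_
    by_cases haN : a = N
    · subst haN
      by_cases hj : σ j = a
      · simp [g, hj, SameCycle.rfl]
      · simp [g, hj, sameCycle_apply_right, SameCycle.rfl]
    by_cases haj : a = j
    · subst haj; simp [g, hN, SameCycle.rfl]
    · have : σ a ≠ N := fun h => haN (σ.injective (h.trans hN.symm))
      simp [g, haN, swap_apply_of_ne_of_ne haj haN, this, sameCycle_apply_right, SameCycle.rfl]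
  simpa [g, hx, hy] using key

end SameCycle

section CycleMin

variable {α : Type*} [LinearOrder α]

def IsCycleMin (σ : Perm α) (i : α) : Prop :=
  ∀ m, σ.SameCycle i m → i ≤ m

instance [Fintype α] (σ : Perm α) (i : α) : Decidable (σ.IsCycleMin i) :=
  inferInstanceAs (Decidable (∀ m, σ.SameCycle i m → i ≤ m))

variable {σ : Perm α} {i j N : α}

theorem isCycleMin_of_apply_eq_self (hN : σ N = N) : σ.IsCycleMin N :=
  fun _ h => (h.eq_of_left hN).le

theorem not_isCycleMin_mul_swap (hN : σ N = N) (hj : j < N) :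
    ¬(σ * swap j N).IsCycleMin N := fun h =>
  hj.not_ge (h j (SameCycle.symm ⟨1, by simp [hN]⟩))

theorem isCycleMin_mul_swap_iff [Finite α] (hN : σ N = N) (hi : i < N) :
    (σ * swap j N).IsCycleMin i ↔ σ.IsCycleMin i := by
  refine ⟨fun h m hm => h m (hm.mul_swap_of_apply_eq_self hN), fun h m hm => ?_⟩
  rcases eq_or_ne m N with rfl | hm'
  · exact hi.le
  · exact h m (hm.of_mul_swap_of_apply_eq_self hN hi.ne hm')

variable {k : ℕ}

def cycleMinsBelow (σ : Perm (Fin k)) (n : ℕ) : Finset (Fin k) :=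
  univ.filter fun i => (i : ℕ) < n ∧ σ.IsCycleMin i

@[simp]
theorem mem_cycleMinsBelow {σ : Perm (Fin k)} {n : ℕ} {i : Fin k} :
    i ∈ cycleMinsBelow σ n ↔ (i : ℕ) < n ∧ σ.IsCycleMin i := by
  simp [cycleMinsBelow]

theorem cycleMinsBelow_zero (σ : Perm (Fin k)) : cycleMinsBelow σ 0 = ∅ := by
  ext; simp

theorem cycleMinsBelow_succ_of_apply_eq_self {σ : Perm (Fin k)} {N : Fin k} (hN : σ N = N) :
    cycleMinsBelow σ (N + 1) = insert N (cycleMinsBelow σ N) := by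
  ext i
  simp only [mem_cycleMinsBelow, mem_insert, Nat.lt_succ_iff_lt_or_eq, Fin.val_inj]
  constructor
  · rintro ⟨hi | rfl, hmin⟩
    exacts [.inr ⟨hi, hmin⟩, .inl rfl]
  · rintro (rfl | ⟨hi, hmin⟩)
    exacts [⟨.inr rfl, isCycleMin_of_apply_eq_self hN⟩, ⟨.inl hi, hmin⟩]

theorem cycleMinsBelow_mul_swap {σ : Perm (Fin k)} {j N : Fin k} (hN : σ N = N) (hj : j < N) :
    cycleMinsBelow (σ * swap j N) (N + 1) = cycleMinsBelow σ N := by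
  ext i
  simp only [mem_cycleMinsBelow, Nat.lt_succ_iff_lt_or_eq, Fin.val_inj]
  constructor
  · rintro ⟨hi | rfl, hmin⟩
    · exact ⟨hi, (isCycleMin_mul_swap_iff hN hi).1 hmin⟩
    · exact absurd hmin (not_isCycleMin_mul_swap hN hj)
  · rintro ⟨hi, hmin⟩
    exact ⟨.inl hi, (isCycleMin_mul_swap_iff hN hi).2 hmin⟩

end CycleMin

end Equiv.Perm

section PermCycles

variable {k : ℕ} (σ : Perm (Fin k))

theorem cycleMk_eq_cycleMk_iff {a b : Fin k} : cycleMk σ a = cycleMk σ b ↔ σ.SameCycle a b :=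
  Quotient.eq (r := SameCycle.setoid σ)

theorem mem_cycleElems {c : PermCycles σ} {a : Fin k} : a ∈ cycleElems σ c ↔ cycleMk σ a = c := by
  simp [cycleElems]

theorem cycleMk_cycMin (c : PermCycles σ) : cycleMk σ (cycMin σ c) = c :=
  (mem_cycleElems σ).1 (Finset.min'_mem _ _)

theorem isCycleMin_iff_cycMin_cycleMk {i : Fin k} :
    σ.IsCycleMin i ↔ cycMin σ (cycleMk σ i) = i := by
  simp only [cycMin, Finset.min'_eq_iff, mem_cycleElems, cycleMk_eq_cycleMk_iff, true_and]
  exact ⟨fun h m hm => h m hm.symm, fun h m hm => h m hm.symm⟩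

theorem prod_cycleMinsBelow_self {M : Type*} [CommMonoid M] (f : Fin k → M) :
    ∏ i ∈ σ.cycleMinsBelow k, f i = ∏ c : PermCycles σ, f (cycMin σ c) := by
  have hmin {i} (hi : i ∈ σ.cycleMinsBelow k) : cycMin σ (cycleMk σ i) = i :=
    (isCycleMin_iff_cycMin_cycleMk σ).1 (mem_cycleMinsBelow.1 hi).2
  refine Finset.prod_nbij' (cycleMk σ) (cycMin σ) (by simp) (fun c _ => ?_)
    (fun i hi => hmin hi) (fun c _ => cycleMk_cycMin σ c) (fun i hi => by rw [hmin hi])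
  simp [isCycleMin_iff_cycMin_cycleMk, cycleMk_cycMin]

end PermCycles

def permsFixingFrom (k n : ℕ) : Finset (Perm (Fin k)) :=
  univ.filter fun σ => ∀ i : Fin k, n ≤ i → σ i = i

section PermsFixingFrom

variable {k : ℕ}

@[simp]
theorem mem_permsFixingFrom {n : ℕ} {σ : Perm (Fin k)} :
    σ ∈ permsFixingFrom k n ↔ ∀ i : Fin k, n ≤ i → σ i = i := by
  simp [permsFixingFrom]

theorem permsFixingFrom_zero : permsFixingFrom k 0 = {1} := by
  ext σ
  simp [Equiv.ext_iff]

theorem permsFixingFrom_self : permsFixingFrom k k = univ := by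
  ext σ
  simp [fun i : Fin k => i.isLt.not_ge]

theorem sum_permsFixingFrom_succ {M : Type*} [AddCommMonoid M] (N : Fin k)
    (f : Perm (Fin k) → M) :
    ∑ τ ∈ permsFixingFrom k (N + 1), f τ =
      ∑ σ ∈ permsFixingFrom k N, ∑ j ∈ Iic N, f (σ * swap j N) := by
  rw [← sum_product']
  symm
  refine sum_nbij' (fun p => p.1 * swap p.2 N) (fun τ => (τ * swap (τ⁻¹ N) N, τ⁻¹ N))
    (fun p hp => ?_) (fun τ hτ => ?_) (fun p hp => ?_) (fun τ _ => mul_swap_mul_self _ _ τ)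
    (fun _ _ => rfl)
  · obtain ⟨σ, j⟩ := p
    simp only [mem_product, mem_permsFixingFrom, mem_Iic, Fin.le_def] at hp ⊢
    intro i hi
    rw [mul_apply, swap_apply_of_ne_of_ne (by omega) (by omega), hp.1 i (by omega)]
  · simp only [mem_product, mem_permsFixingFrom, mem_Iic, Fin.le_def] at hτ ⊢
    have hτN : τ (τ⁻¹ N) = N := τ.apply_symm_apply N
    have hle : (τ⁻¹ N : ℕ) ≤ N := by
      by_contra! h
      have := hτ _ h
      omega
    refine ⟨fun i hi => ?_, hle⟩
    rcases hi.eq_or_lt with hi | hi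
    · simp [← Fin.ext hi]
    · rw [mul_apply, swap_apply_of_ne_of_ne (by omega) (by omega), hτ i hi]
  · obtain ⟨σ, j⟩ := p
    simp only [mem_product, mem_permsFixingFrom] at hp
    have hσN : σ N = N := hp.1 N le_rfl
    have hσN' : σ⁻¹ N = N := by rw [Perm.inv_eq_iff_eq, hσN]
    have hinv : (σ * swap j N)⁻¹ N = j := by
      rw [mul_inv_rev, swap_inv, mul_apply, hσN', swap_apply_right]
    rw [hinv, mul_swap_mul_self]

end PermsFixingFrom

section GroupAlgebra

open MonoidAlgebra

variable {R : Type*} [CommRing R] {k : ℕ}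

noncomputable def cycleMinSum (x : Fin k → R) (n : ℕ) : MonoidAlgebra R (Perm (Fin k)) :=
  ∑ σ ∈ permsFixingFrom k n, single σ (∏ i ∈ σ.cycleMinsBelow n, -x i)

theorem JM_eq_sum_Iio (N : Fin k) :
    JM R N = ∑ j ∈ Iio N, single (swap j N) 1 := by
  simp [JM, filter_gt_eq_Iio]

theorem cycleMinSum_succ (x : Fin k → R) (N : Fin k) :
    cycleMinSum x (N + 1) = -(cycleMinSum x N * (algebraMap R _ (x N) - JM R N)) := by
  rw [cycleMinSum, sum_permsFixingFrom_succ, cycleMinSum, sum_mul, ← sum_neg_distrib]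
  refine sum_congr rfl fun σ hσ => ?_
  have hN : σ N = N := mem_permsFixingFrom.1 hσ N le_rfl
  set c := ∏ i ∈ σ.cycleMinsBelow N, -x i
  have h_fixed : single (σ * swap N N) (∏ i ∈ (σ * swap N N).cycleMinsBelow (N + 1), -x i) =
      -(single σ c * algebraMap R _ (x N)) := by
    rw [swap_self, ← Perm.one_def, mul_one, cycleMinsBelow_succ_of_apply_eq_self hN,
      prod_insert (by simp), coe_algebraMap, Function.comp_apply, Algebra.algebraMap_self,
      RingHom.id_apply, single_mul_single, mul_one, ← single_neg, neg_mul, mul_comm]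
  have h_swap (j) (hj : j ∈ Iio N) :
      single (σ * swap j N) (∏ i ∈ (σ * swap j N).cycleMinsBelow (N + 1), -x i) =
        single σ c * single (swap j N) 1 := by
    rw [single_mul_single, mul_one, cycleMinsBelow_mul_swap hN (mem_Iio.1 hj)]
  rw [← Iio_insert, sum_insert notMem_Iio_self, h_fixed, sum_congr rfl h_swap, JM_eq_sum_Iio,
    mul_sub, mul_sum]
  abel

theorem prod_take_ofFn_sub_JM (x : Fin k → R) {n : ℕ} (hn : n ≤ k) :
    ((List.ofFn fun i : Fin k => algebraMap R _ (x i) - JM R i).take n).prod =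
      (-1) ^ n * cycleMinSum x n := by
  induction n with
  | zero =>
    simp [cycleMinSum, permsFixingFrom_zero, cycleMinsBelow_zero, ← MonoidAlgebra.one_def]
  | succ n ih =>
    let N : Fin k := ⟨n, hn⟩
    rw [List.prod_take_succ _ _ (by simpa), List.getElem_ofFn, ih (by omega),
      show n + 1 = (N : ℕ) + 1 from rfl, cycleMinSum_succ x N]
    simp [pow_succ, mul_assoc, N]

theorem prod_ofFn_sub_JM (x : Fin k → R) :
    (List.ofFn fun i : Fin k => algebraMap R _ (x i) - JM R i).prod =
      (-1) ^ k * ∑ σ : Perm (Fin k), (∏ c : PermCycles σ, -x (cycMin σ c)) • of R _ σ := by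
  have h := prod_take_ofFn_sub_JM x le_rfl
  rw [List.take_of_length_le (by simp)] at h
  simp only [h, cycleMinSum, permsFixingFrom_self, smul_of, prod_cycleMinsBelow_self]

end GroupAlgebra

theorem stmt_0_general (k : ℕ) :
    (List.ofFn (fun i : Fin k =>
        algebraMap (MvPolynomial (Fin k) ℚ) _ (MvPolynomial.X i) - JM (MvPolynomial (Fin k) ℚ) i)).prod
      = (-1 : MonoidAlgebra (MvPolynomial (Fin k) ℚ) (Equiv.Perm (Fin k))) ^ k *
        ∑ σ : Equiv.Perm (Fin k),
          (∏ c : PermCycles σ, (- MvPolynomial.X (cycMin σ c) : MvPolynomial (Fin k) ℚ)) •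
            MonoidAlgebra.of (MvPolynomial (Fin k) ℚ) (Equiv.Perm (Fin k)) σ :=
  prod_ofFn_sub_JM MvPolynomial.X

/-- **Lemma 1 (combinatorics of Jucys–Murphy elements).**
For variables `X_1, …, X_k`, in `ℚ[X_1,…,X_k][S(k)]` one has
`X_1 (X_2 - J_2) ⋯ (X_k - J_k) = (-1)^k ∑_{σ ∈ S(k)} (∏_{c ∈ C(σ)} (-X_{min c})) σ`. -/
theorem stmt_0 (k : ℕ) (hk : 0 < k) :
    (List.ofFn (fun i : Fin k =>
        algebraMap (MvPolynomial (Fin k) ℚ) _ (MvPolynomial.X i) - JM (MvPolynomial (Fin k) ℚ) i)).prod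
      = (-1 : MonoidAlgebra (MvPolynomial (Fin k) ℚ) (Equiv.Perm (Fin k))) ^ k *
        ∑ σ : Equiv.Perm (Fin k),
          (∏ c : PermCycles σ, (- MvPolynomial.X (cycMin σ c) : MvPolynomial (Fin k) ℚ)) •
            MonoidAlgebra.of (MvPolynomial (Fin k) ℚ) (Equiv.Perm (Fin k)) σ :=
  stmt_0_general k
end

section
/- (Okounkov–Olshanski) For integers k ≤ n, a permutation μ ∈ S(k) and a partition ν ⊢ n, the normalised character satisfies χ̂_ν(μ) = Σ_{λ⊢k} χ_λ(μ) · s*_λ(ν), where s*_λ is the shifted Schur function. -/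
open scoped Classical

/-- `μ'` is obtained from the partition `μ` of `k+1` by removing one (corner) box:
some part `p` of `μ` is replaced by `p - 1` (deleted if `p = 1`). -/
def IsCover {k : ℕ} (μ' : Nat.Partition k) (μ : Nat.Partition (k + 1)) : Prop :=
  ∃ p ∈ μ.parts, μ'.parts = Multiset.filter (fun x => 0 < x) ((p - 1) ::ₘ μ.parts.erase p)

/-- The canonical embedding of `S(k)` into `S(n)` for `k ≤ n`, acting on the first `k`
points and fixing the others. -/
noncomputable def embPerm {k n : ℕ} (h : k ≤ n) :
    Equiv.Perm (Fin k) →* Equiv.Perm (Fin n) :=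
  Equiv.Perm.viaEmbeddingHom (Fin.castLEEmb h)

/-- A family `W k λ` (for `λ ⊢ k`) realizing the canonical indexing of the irreducible
(complex) representations of the symmetric groups by partitions: the `W k λ` are
irreducible, pairwise non-isomorphic, they satisfy the branching rule (stated as a
character identity along the standard embedding `S(k) ⊆ S(k+1)`), the one-row partition
carries the trivial representation and the one-column partition the sign representation. -/
structure SymmIrrepFamily : Type 1 where
  W : ∀ k : ℕ, Nat.Partition k → FDRep ℂ (Equiv.Perm (Fin k))
  simple : ∀ (k : ℕ) (l : Nat.Partition k), CategoryTheory.Simple (W k l)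
  non_iso : ∀ (k : ℕ) (l₁ l₂ : Nat.Partition k), l₁ ≠ l₂ → IsEmpty (W k l₁ ≅ W k l₂)
  branching : ∀ (k : ℕ) (l : Nat.Partition (k + 1)) (σ : Equiv.Perm (Fin k)),
    (W (k + 1) l).character (embPerm (Nat.le_succ k) σ)
      = ∑ l' : Nat.Partition k, if IsCover l' l then (W k l').character σ else 0
  row_trivial : ∀ (k : ℕ) (l : Nat.Partition k), l.parts = Multiset.replicate 1 k →
    ∀ σ, (W k l).character σ = 1
  complete : ∀ (k : ℕ) (V : FDRep ℂ (Equiv.Perm (Fin k))), CategoryTheory.Simple V →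
    ∃ l : Nat.Partition k, Nonempty (V ≅ W k l)
  col_sign : ∀ (k : ℕ) (l : Nat.Partition k), l.parts = Multiset.replicate k 1 →
    ∀ σ, (W k l).character σ = ((Equiv.Perm.sign σ : ℤ) : ℂ)

/-- The normalised character `χ̂_ν(μ) = n(n-1)⋯(n-k+1) χ_ν(μ)/χ_ν(id)` for `μ ∈ S(k)`,
`ν ⊢ n`, `k ≤ n`. -/
noncomputable def normChar (F : SymmIrrepFamily) {k n : ℕ} (h : k ≤ n)
    (ν : Nat.Partition n) (μ : Equiv.Perm (Fin k)) : ℂ :=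
  (n.descFactorial k : ℂ) * (F.W n ν).character (embPerm h μ) / (F.W n ν).character 1

/-- The falling factorial `(r)_t = r(r-1)⋯(r-t+1)` of a ring element. -/
def ffact {F : Type*} [CommRing F] (r : F) (t : ℕ) : F :=
  ∏ s ∈ Finset.range t, (r - (s : F))

/-- The `j`-th part (0-indexed) of a partition, in weakly decreasing order
(`0` for `j` at least the number of parts). -/
def part {n : ℕ} (ν : Nat.Partition n) (j : ℕ) : ℕ :=
  (ν.parts.sort (· ≥ ·)).getD j 0

/-- The shifted Schur polynomial in `l` variables,
`s*_λ(x_1,…,x_l) = det((x_i + l - i)_{λ_j + l - j}) / det((x_i + l - i)_{l - j})`,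
for a partition with parts `lam 0 ≥ lam 1 ≥ …` (`lam j` is the `(j+1)`-st part). -/
noncomputable def sstar {F : Type*} [Field F] (l : ℕ) (lam : ℕ → ℕ) (x : Fin l → F) : F :=
  Matrix.det (Matrix.of fun i j : Fin l =>
      ffact (x i + ((l - 1 - (i : ℕ) : ℕ) : F)) (lam (j : ℕ) + (l - 1 - (j : ℕ))))
    / Matrix.det (Matrix.of fun i j : Fin l =>
      ffact (x i + ((l - 1 - (i : ℕ) : ℕ) : F)) (l - 1 - (j : ℕ)))

namespace OO

open Multiset in
/-- characterize the sort of a multiset -/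
lemma sort_eq_of {s : Multiset ℕ} {l : List ℕ} (hs : l.Pairwise (· ≥ ·))
    (hl : (l : Multiset ℕ) = s) : s.sort (· ≥ ·) = l := by
  refine List.Perm.eq_of_pairwise' (Multiset.pairwise_sort _ _) hs ?_
  rw [← Multiset.coe_eq_coe, Multiset.sort_eq, hl]

variable {k : ℕ}

lemma part_antitone (μ : Nat.Partition k) {i j : ℕ} (hij : i ≤ j) : part μ j ≤ part μ i := by
  set L := μ.parts.sort (· ≥ ·) with hL
  have hs : L.Pairwise (· ≥ ·) := Multiset.pairwise_sort _ _
  by_cases hj : j < L.length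
  · have hi : i < L.length := lt_of_le_of_lt hij hj
    show L.getD j 0 ≤ L.getD i 0
    rw [List.getD_eq_getElem _ _ hj, List.getD_eq_getElem _ _ hi]
    rcases eq_or_lt_of_le hij with rfl | hlt
    · exact le_refl _
    · exact List.pairwise_iff_getElem.mp hs i j hi hj hlt
  · show L.getD j 0 ≤ L.getD i 0
    rw [List.getD_eq_default _ _ (le_of_not_gt hj)]
    exact Nat.zero_le _

lemma part_mem (μ : Nat.Partition k) {j : ℕ} (hj : j < (μ.parts.sort (· ≥ ·)).length) :
    part μ j ∈ μ.parts := by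
  have : part μ j ∈ (μ.parts.sort (· ≥ ·)) := by
    rw [part, List.getD_eq_getElem _ _ hj]; exact List.getElem_mem _
  rwa [← Multiset.mem_coe, Multiset.sort_eq] at this

lemma part_pos (μ : Nat.Partition k) {j : ℕ} (hj : j < (μ.parts.sort (· ≥ ·)).length) :
    0 < part μ j := μ.parts_pos (part_mem μ hj)

lemma part_eq_zero (μ : Nat.Partition k) {j : ℕ} (hj : (μ.parts.sort (· ≥ ·)).length ≤ j) :
    part μ j = 0 := List.getD_eq_default _ _ hj

lemma card_le_sum' (s : Multiset ℕ) (h : ∀ a ∈ s, 0 < a) : Multiset.card s ≤ s.sum := by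
  induction s using Multiset.induction with
  | empty => simp
  | cons a s ih =>
    simp only [Multiset.card_cons, Multiset.sum_cons]
    have ha : 0 < a := h a (Multiset.mem_cons_self a s)
    have := ih (fun b hb => h b (Multiset.mem_cons_of_mem hb))
    omega

lemma length_le (μ : Nat.Partition k) : (μ.parts.sort (· ≥ ·)).length ≤ k := by
  rw [Multiset.length_sort]
  calc Multiset.card μ.parts ≤ μ.parts.sum := card_le_sum' _ (fun a ha => μ.parts_pos ha)
    _ = k := μ.parts_sum

lemma sum_part (μ : Nat.Partition k) {m : ℕ} (hm : (μ.parts.sort (· ≥ ·)).length ≤ m) :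
    ∑ j ∈ Finset.range m, part μ j = k := by
  have haux : ∀ (l : List ℕ), ∑ j ∈ Finset.range l.length, l.getD j 0 = l.sum := by
    intro l
    induction l with
    | nil => simp
    | cons a t ih =>
      rw [List.length_cons, Finset.sum_range_succ']
      simp only [List.getD_cons_succ, List.getD_cons_zero, ih, List.sum_cons]
      omega
  have h2 : ∑ j ∈ Finset.range m, part μ j
      = ∑ j ∈ Finset.range (μ.parts.sort (· ≥ ·)).length, part μ j := by
    rw [Finset.sum_subset (Finset.range_subset_range.mpr hm)]
    intro x _ hx
    exact part_eq_zero μ (by simpa using hx)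
  rw [h2]
  simp only [part]
  rw [haux]
  have := congrArg Multiset.sum (Multiset.sort_eq μ.parts (· ≥ ·))
  rw [Multiset.sum_coe] at this
  rw [this, μ.parts_sum]

lemma part_injective {μ ν : Nat.Partition k} (h : part μ = part ν) : μ = ν := by
  set L := μ.parts.sort (· ≥ ·) with hL
  set M := ν.parts.sort (· ≥ ·) with hM
  have hlen : L.length = M.length := by
    by_contra hne
    rcases Nat.lt_or_ge L.length M.length with hlt | hge
    · have h1 : part μ L.length = 0 := part_eq_zero μ le_rfl
      have h2 : 0 < part ν L.length := part_pos ν hlt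
      rw [h] at h1; omega
    · rcases lt_or_eq_of_le hge with hlt | heq
      · have h1 : part ν M.length = 0 := part_eq_zero ν le_rfl
        have h2 : 0 < part μ M.length := part_pos μ hlt
        rw [h] at h2; omega
      · exact hne heq.symm
  have : L = M := by
    apply List.ext_getElem hlen
    intro j h1 h2
    have e1 : part μ j = L[j] := List.getD_eq_getElem _ _ h1
    have e2 : part ν j = M[j] := List.getD_eq_getElem _ _ h2
    rw [← e1, ← e2, h]
  apply Nat.Partition.ext
  rw [← Multiset.sort_eq μ.parts (· ≥ ·), ← Multiset.sort_eq ν.parts (· ≥ ·)]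
  rw [← hL, ← hM, this]

/-- `j` is an addable position for `μ` (0-indexed row where a box can be added). -/
def Addable (μ : Nat.Partition k) (j : ℕ) : Prop := j = 0 ∨ part μ j < part μ (j - 1)

lemma addable_le_length {μ : Nat.Partition k} {j : ℕ} (h : Addable μ j) :
    j ≤ (μ.parts.sort (· ≥ ·)).length := by
  by_contra hlt
  push_neg at hlt
  rcases h with rfl | h
  · omega
  · have h1 : part μ j = 0 := part_eq_zero μ (by omega)
    have h2 : part μ (j - 1) = 0 := part_eq_zero μ (by omega)
    omega

lemma zero_not_mem_parts (μ : Nat.Partition k) : 0 ∉ μ.parts :=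
  fun hmem => absurd (μ.parts_pos hmem) (by omega)

/-- Adding a box to `μ` at row `j`. -/
noncomputable def addBox (μ : Nat.Partition k) (j : ℕ) : Nat.Partition (k + 1) where
  parts := (part μ j + 1) ::ₘ μ.parts.erase (part μ j)
  parts_pos := by
    intro a ha
    rcases Multiset.mem_cons.mp ha with rfl | ha
    · omega
    · exact μ.parts_pos (Multiset.mem_of_mem_erase ha)
  parts_sum := by
    rw [Multiset.sum_cons]
    by_cases hj : j < (μ.parts.sort (· ≥ ·)).length
    · have hmem : part μ j ∈ μ.parts := part_mem μ hj
      have h1 : part μ j + (μ.parts.erase (part μ j)).sum = μ.parts.sum := by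
        rw [← Multiset.sum_cons, Multiset.cons_erase hmem]
      rw [μ.parts_sum] at h1
      omega
    · have h0 : part μ j = 0 := part_eq_zero μ (by omega)
      rw [h0, Multiset.erase_of_notMem (zero_not_mem_parts μ), μ.parts_sum]
      omega

lemma parts_eq_map (μ : Nat.Partition k) :
    μ.parts = Multiset.map (part μ) (Multiset.range (μ.parts.sort (· ≥ ·)).length) := by
  conv_lhs => rw [← Multiset.sort_eq μ.parts (· ≥ ·)]
  show ((μ.parts.sort (· ≥ ·) : List ℕ) : Multiset ℕ) = _
  rw [show Multiset.range (μ.parts.sort (· ≥ ·)).length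
      = ((List.range (μ.parts.sort (· ≥ ·)).length : List ℕ) : Multiset ℕ) from rfl,
    Multiset.map_coe, Multiset.coe_eq_coe]
  apply List.Perm.of_eq
  apply List.ext_getElem (by simp)
  intro t h1 h2
  simp only [List.getElem_map, List.getElem_range]
  exact (List.getD_eq_getElem _ _ h1).symm

lemma part_addBox (μ : Nat.Partition k) {j : ℕ} (hj : Addable μ j) :
    part (addBox μ j) = fun t => if t = j then part μ j + 1 else part μ t := by
  classical
  set L := μ.parts.sort (· ≥ ·) with hL
  set len := L.length with hlen
  set g : ℕ → ℕ := fun t => if t = j then part μ j + 1 else part μ t with hg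
  have hjlen : j ≤ len := addable_le_length hj
  have g_anti : ∀ t, g (t + 1) ≤ g t := by
    intro t
    simp only [hg]
    by_cases h1 : t + 1 = j
    · rw [if_pos h1, if_neg (by omega)]
      rcases hj with rfl | hj2
      · omega
      · have ht1 : t = j - 1 := by omega
        rw [ht1]; omega
    · rw [if_neg h1]
      by_cases h2 : t = j
      · rw [if_pos h2]
        have := part_antitone μ (Nat.le_succ t)
        simp only [Nat.succ_eq_add_one] at this
        subst h2; omega
      · rw [if_neg h2]
        exact part_antitone μ (Nat.le_succ t)
  set len' := if j = len then len + 1 else len with hlen'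
  have hjlen' : j < len' := by simp only [hlen']; split <;> omega
  set l : List ℕ := (List.range len').map g with hl
  have hlength : l.length = len' := by simp [hl]
  have hget : ∀ t (h : t < len'), l[t]'(by rw [hlength]; exact h) = g t := by
    intro t h
    simp only [hl, List.getElem_map, List.getElem_range]
  have hsorted : l.Pairwise (· ≥ ·) := by
    rw [← List.isChain_iff_pairwise, List.isChain_iff_getElem]
    intro i hi
    have hi' : i < len' - 1 := by rw [hlength] at hi; omega
    rw [hget i (lt_of_lt_of_le hi' (Nat.sub_le _ _)), hget (i+1) (Nat.add_lt_of_lt_sub hi')]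
    exact g_anti i
  have hcoe : (l : Multiset ℕ) = (addBox μ j).parts := by
    show _ = (part μ j + 1) ::ₘ μ.parts.erase (part μ j)
    rw [hl, ← Multiset.map_coe]
    rcases Nat.lt_or_ge j len with hcase | hcase
    · -- j < len
      have hlen'eq : len' = len := by simp only [hlen']; rw [if_neg (by omega)]
      rw [hlen'eq]
      have hjr : j ∈ Multiset.range len := Multiset.mem_range.mpr hcase
      have hnodup : (Multiset.range len).Nodup := Multiset.nodup_range len
      have hdecomp : (Multiset.range len : Multiset ℕ) = j ::ₘ (Multiset.range len).erase j :=
        (Multiset.cons_erase hjr).symm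
      have hmapg : Multiset.map g ((List.range len : List ℕ) : Multiset ℕ)
          = g j ::ₘ Multiset.map g ((Multiset.range len).erase j) := by
        show Multiset.map g (Multiset.range len) = _
        conv_lhs => rw [hdecomp, Multiset.map_cons]
      rw [hmapg]
      have hcongr : Multiset.map g ((Multiset.range len).erase j)
          = Multiset.map (part μ) ((Multiset.range len).erase j) := by
        apply Multiset.map_congr rfl
        intro a ha
        have := (hnodup.mem_erase_iff.mp ha).1
        simp only [hg]; rw [if_neg this]
      have hparts : μ.parts = part μ j ::ₘ Multiset.map (part μ) ((Multiset.range len).erase j) := by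
        conv_lhs => rw [parts_eq_map μ, ← hL, ← hlen, hdecomp, Multiset.map_cons]
      have herase : μ.parts.erase (part μ j) = Multiset.map (part μ) ((Multiset.range len).erase j) := by
        rw [hparts, Multiset.erase_cons_head]
      rw [hcongr, herase]
      have : g j = part μ j + 1 := by simp [hg]
      rw [this]
    · -- j = len
      have hjeq : j = len := by omega
      have hlen'eq : len' = len + 1 := by simp only [hlen']; rw [if_pos hjeq]
      have hf0 : part μ j = 0 := part_eq_zero μ (show L.length ≤ j from hlen ▸ hcase)
      rw [hlen'eq]
      have : Multiset.map g ((List.range (len+1) : List ℕ) : Multiset ℕ)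
          = g len ::ₘ Multiset.map g (Multiset.range len) := by
        show Multiset.map g (Multiset.range (len+1)) = _
        rw [Multiset.range_succ, Multiset.map_cons]
      rw [this]
      have hcongr : Multiset.map g (Multiset.range len) = Multiset.map (part μ) (Multiset.range len) := by
        apply Multiset.map_congr rfl
        intro a ha
        have : a < len := Multiset.mem_range.mp ha
        simp only [hg]; rw [if_neg (by omega)]
      have hglen : g len = 1 := by simp only [hg]; rw [← hjeq, if_pos rfl, hf0]
      rw [hcongr, hglen, ← parts_eq_map μ, hf0,
        Multiset.erase_of_notMem (zero_not_mem_parts μ)]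
  have hsort : (addBox μ j).parts.sort (· ≥ ·) = l := sort_eq_of hsorted hcoe
  funext t
  show ((addBox μ j).parts.sort (· ≥ ·)).getD t 0 = g t
  rw [hsort]
  rcases Nat.lt_or_ge t len' with hc | hc
  · rw [List.getD_eq_getElem _ _ (by rw [hlength]; exact hc)]
    exact hget t hc
  · rw [List.getD_eq_default _ _ (by rw [hlength]; exact hc)]
    have ht : t ≠ j := by omega
    have hlent : len ≤ t := by
      rw [hlen'] at hc
      split at hc <;> omega
    have hzero : part μ t = 0 := part_eq_zero μ (show L.length ≤ t from hlen ▸ hlent)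
    simp only [hg]
    rw [if_neg ht, hzero]

lemma isCover_addBox (μ : Nat.Partition k) {j : ℕ} (hj : Addable μ j) :
    IsCover μ (addBox μ j) := by
  classical
  refine ⟨part μ j + 1, Multiset.mem_cons_self _ _, ?_⟩
  show μ.parts = Multiset.filter _
    ((part μ j + 1 - 1) ::ₘ (((part μ j + 1) ::ₘ μ.parts.erase (part μ j)).erase (part μ j + 1)))
  rw [Multiset.erase_cons_head, Nat.add_sub_cancel]
  have hfe : Multiset.filter (fun x => 0 < x) (μ.parts.erase (part μ j))
      = μ.parts.erase (part μ j) :=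
    Multiset.filter_eq_self.mpr (fun a ha => μ.parts_pos (Multiset.mem_of_mem_erase ha))
  by_cases hc : j < (μ.parts.sort (· ≥ ·)).length
  · have hpos : 0 < part μ j := part_pos μ hc
    have hmem : part μ j ∈ μ.parts := part_mem μ hc
    rw [Multiset.filter_cons_of_pos _ hpos, hfe, Multiset.cons_erase hmem]
  · have h0 : part μ j = 0 := part_eq_zero μ (by omega)
    rw [h0, Multiset.filter_cons_of_neg _ (by omega)]
    rw [Multiset.erase_of_notMem (by rw [h0] at *; exact zero_not_mem_parts μ)] at hfe ⊢
    rw [hfe]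

lemma exists_addable_of_isCover {μ : Nat.Partition k} {Λ : Nat.Partition (k + 1)}
    (h : IsCover μ Λ) : ∃ j, j ≤ k ∧ Addable μ j ∧ Λ = addBox μ j := by
  classical
  obtain ⟨p, hp, heq⟩ := h
  have hppos : 0 < p := Λ.parts_pos hp
  rcases Nat.lt_or_ge 1 p with hp1 | hp1
  · -- p ≥ 2
    have hqpos : 0 < p - 1 := by omega
    have heq' : μ.parts = (p - 1) ::ₘ Λ.parts.erase p := by
      rw [heq, Multiset.filter_cons_of_pos _ hqpos, Multiset.filter_eq_self.mpr
        (fun a ha => Λ.parts_pos (Multiset.mem_of_mem_erase ha))]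
    have hqmem : p - 1 ∈ μ.parts := by rw [heq']; exact Multiset.mem_cons_self _ _
    have hex : ∃ t, part μ t = p - 1 := by
      have : p - 1 ∈ ((μ.parts.sort (· ≥ ·) : List ℕ) : Multiset ℕ) := by
        rwa [Multiset.sort_eq]
      rw [Multiset.mem_coe] at this
      obtain ⟨i, hi, hget⟩ := List.mem_iff_getElem.mp this
      exact ⟨i, by rw [part, List.getD_eq_getElem _ _ hi, hget]⟩
    set j := Nat.find hex with hjdef
    have hfj : part μ j = p - 1 := Nat.find_spec hex
    have haddable : Addable μ j := by
      rcases Nat.eq_zero_or_pos j with h0 | h0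
      · exact Or.inl h0
      · right
        have hne : part μ (j - 1) ≠ p - 1 := Nat.find_min hex (by omega)
        have hge : part μ j ≤ part μ (j - 1) := part_antitone μ (by omega)
        omega
    have hjk : j ≤ k := by
      by_contra hgt
      have : part μ j = 0 := part_eq_zero μ (le_trans (length_le μ) (by omega))
      omega
    refine ⟨j, hjk, haddable, ?_⟩
    apply Nat.Partition.ext
    show Λ.parts = (part μ j + 1) ::ₘ μ.parts.erase (part μ j)
    rw [hfj, show p - 1 + 1 = p by omega]
    rw [heq', Multiset.erase_cons_head, Multiset.cons_erase hp]
  · -- p = 1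
    have hp1' : p = 1 := by omega
    subst hp1'
    have heq' : μ.parts = Λ.parts.erase 1 := by
      rw [heq, Multiset.filter_cons_of_neg _ (by omega), Multiset.filter_eq_self.mpr
        (fun a ha => Λ.parts_pos (Multiset.mem_of_mem_erase ha))]
    set len := (μ.parts.sort (· ≥ ·)).length with hlen
    have haddable : Addable μ len := by
      rcases Nat.eq_zero_or_pos len with h0 | h0
      · exact Or.inl h0
      · right
        have h1 : part μ len = 0 := part_eq_zero μ le_rfl
        have h2 : 0 < part μ (len - 1) := part_pos μ (by omega)
        omega
    refine ⟨len, length_le μ, haddable, ?_⟩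
    apply Nat.Partition.ext
    show Λ.parts = (part μ len + 1) ::ₘ μ.parts.erase (part μ len)
    have h1 : part μ len = 0 := part_eq_zero μ le_rfl
    rw [h1, Multiset.erase_of_notMem (zero_not_mem_parts μ), heq',
      Multiset.cons_erase hp]

lemma addBox_inj {μ : Nat.Partition k} {j j' : ℕ} (hj : Addable μ j) (hj' : Addable μ j')
    (h : addBox μ j = addBox μ j') : j = j' := by
  by_contra hne
  have h1 : part (addBox μ j) j = part (addBox μ j') j := by rw [h]
  rw [part_addBox μ hj, part_addBox μ hj'] at h1
  simp only [if_pos rfl, if_true, if_neg hne] at h1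
  omega

lemma sum_covers {M : Type*} [AddCommMonoid M] (μ : Nat.Partition k) {n : ℕ} (hkn : k < n)
    (g : Nat.Partition (k + 1) → M) :
    ∑ Λ : Nat.Partition (k + 1), (if IsCover μ Λ then g Λ else 0)
      = ∑ j ∈ (Finset.range n).filter (fun j => Addable μ j), g (addBox μ j) := by
  classical
  rw [← Finset.sum_filter]
  symm
  apply Finset.sum_bij (fun j _ => addBox μ j)
  · intro a ha
    rw [Finset.mem_filter] at ha ⊢
    exact ⟨Finset.mem_univ _, isCover_addBox μ ha.2⟩
  · intro a ha b hb hab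
    rw [Finset.mem_filter] at ha hb
    exact addBox_inj ha.2 hb.2 hab
  · intro Λ hΛ
    rw [Finset.mem_filter] at hΛ
    obtain ⟨j, hjk, hadd, rfl⟩ := exists_addable_of_isCover hΛ.2
    exact ⟨j, Finset.mem_filter.mpr ⟨Finset.mem_range.mpr (by omega), hadd⟩, rfl⟩
  · intro a _
    rfl

/-! ### Determinant lemmas -/

lemma ffact_succ {F : Type*} [CommRing F] (r : F) (t : ℕ) :
    ffact r (t + 1) = (r - t) * ffact r t := by
  rw [ffact, Finset.prod_range_succ, ffact]; ring

lemma ffact_cast_eq_zero {a t : ℕ} (h : a < t) : ffact ((a : ℕ) : ℂ) t = 0 := by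
  apply Finset.prod_eq_zero (Finset.mem_range.mpr h)
  simp

/-- numerator matrix of the shifted Schur polynomial -/
noncomputable def Amat (n : ℕ) (lam : ℕ → ℕ) (x : Fin n → ℂ) : Matrix (Fin n) (Fin n) ℂ :=
  Matrix.of fun i j : Fin n =>
    ffact (x i + ((n - 1 - (i : ℕ) : ℕ) : ℂ)) (lam (j : ℕ) + (n - 1 - (j : ℕ)))

/-- denominator matrix of the shifted Schur polynomial -/
noncomputable def Dmat (n : ℕ) (x : Fin n → ℂ) : Matrix (Fin n) (Fin n) ℂ :=
  Matrix.of fun i j : Fin n =>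
    ffact (x i + ((n - 1 - (i : ℕ) : ℕ) : ℂ)) (n - 1 - (j : ℕ))

lemma sstar_eq (n : ℕ) (lam : ℕ → ℕ) (x : Fin n → ℂ) :
    sstar n lam x = (Amat n lam x).det / (Dmat n x).det := rfl

lemma Amat_congr (n : ℕ) {lam lam' : ℕ → ℕ} (h : ∀ t, lam t = lam' t) (x : Fin n → ℂ) :
    Amat n lam x = Amat n lam' x := by
  unfold Amat
  ext i j
  simp only [Matrix.of_apply]
  rw [h (j : ℕ)]

lemma sum_det_updateColumn_mul {n : ℕ} (y : Fin n → ℂ) (A : Matrix (Fin n) (Fin n) ℂ) :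
    ∑ j : Fin n, (A.updateCol j (fun i => y i * A i j)).det
      = (∑ i, y i) * A.det := by
  simp only [Matrix.det_apply']
  rw [Finset.sum_comm, Finset.mul_sum]
  apply Finset.sum_congr rfl
  intro σ _
  have hprod : ∀ j : Fin n, (∏ i, (A.updateCol j (fun i => y i * A i j)) (σ i) i)
      = y (σ j) * ∏ i, A (σ i) i := by
    intro j
    rw [← Finset.mul_prod_erase Finset.univ _ (Finset.mem_univ j),
        ← Finset.mul_prod_erase Finset.univ (fun i => A (σ i) i) (Finset.mem_univ j),
        Finset.prod_congr rfl (fun i hi =>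
          show (A.updateCol j fun i => y i * A i j) (σ i) i = A (σ i) i by
            rw [Matrix.updateCol_apply, if_neg (Finset.mem_erase.mp hi).1]),
        Matrix.updateCol_apply, if_pos rfl]
    ring
  calc ∑ j : Fin n, (Equiv.Perm.sign σ : ℂ)
          * ∏ i, (A.updateCol j (fun i => y i * A i j)) (σ i) i
      = ∑ j : Fin n, (Equiv.Perm.sign σ : ℂ) * (y (σ j) * ∏ i, A (σ i) i) := by
        exact Finset.sum_congr rfl (fun j _ => by rw [hprod j])
    _ = (Equiv.Perm.sign σ : ℂ) * ((∑ j : Fin n, y (σ j)) * ∏ i, A (σ i) i) := by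
        rw [← Finset.mul_sum, ← Finset.sum_mul]
    _ = (∑ i, y i) * ((Equiv.Perm.sign σ : ℂ) * ∏ i, A (σ i) i) := by
        rw [Equiv.sum_comp σ y]; ring

/-- bumping the partition function at position `j` -/
def bump {k : ℕ} (μ : Nat.Partition k) (j : ℕ) : ℕ → ℕ :=
  fun t => if t = j then part μ j + 1 else part μ t

lemma coherence_det {k n : ℕ} (hkn : k < n) (μ : Nat.Partition k) (x : Fin n → ℂ) :
    ∑ j ∈ (Finset.range n).filter (fun j => Addable μ j), (Amat n (bump μ j) x).det
      = ((∑ i, x i) - (k : ℂ)) * (Amat n (part μ) x).det := by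
  classical
  set y : Fin n → ℂ := fun i => x i + ((n - 1 - (i : ℕ) : ℕ) : ℂ) with hy
  set A := Amat n (part μ) x with hA
  -- step 1: extend sum over all of range n
  have hzero : ∀ j ∈ Finset.range n, j ∉ (Finset.range n).filter (fun j => Addable μ j) →
      (Amat n (bump μ j) x).det = 0 := by
    intro j hj hnotin
    rw [Finset.mem_filter, not_and] at hnotin
    have hnadd : ¬ Addable μ j := hnotin hj
    rw [Addable, not_or, not_lt] at hnadd
    obtain ⟨hj0, hle⟩ := hnadd
    have hjpos : 0 < j := Nat.pos_of_ne_zero hj0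
    have hjn : j < n := Finset.mem_range.mp hj
    have heq : part μ (j - 1) = part μ j :=
      le_antisymm hle (part_antitone μ (by omega))
    rw [← Matrix.det_transpose]
    apply Matrix.det_zero_of_row_eq (i := (⟨j - 1, by omega⟩ : Fin n))
      (j := (⟨j, hjn⟩ : Fin n))
    · intro hfineq
      rw [Fin.mk.injEq] at hfineq
      omega
    · funext i
      have h1 : j - 1 ≠ j := by omega
      have hb1 : bump μ j (j - 1) = part μ (j - 1) := by unfold bump; rw [if_neg h1]
      have hb2 : bump μ j j = part μ j + 1 := by unfold bump; rw [if_pos rfl]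
      show (Amat n (bump μ j) x) i ⟨j - 1, by omega⟩ = (Amat n (bump μ j) x) i ⟨j, hjn⟩
      show ffact (x i + ((n - 1 - (i : ℕ) : ℕ) : ℂ)) (bump μ j (j - 1) + (n - 1 - (j - 1)))
        = ffact (x i + ((n - 1 - (i : ℕ) : ℕ) : ℂ)) (bump μ j j + (n - 1 - j))
      rw [hb1, hb2, heq]
      congr 1
      omega
  rw [Finset.sum_subset (Finset.filter_subset _ _) hzero]
  -- step 2: to Fin n
  rw [← Fin.sum_univ_eq_sum_range (fun j => (Amat n (bump μ j) x).det) n]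
  -- step 3: rewrite each bumped determinant
  have hmat : ∀ j : Fin n, Amat n (bump μ (j : ℕ)) x
      = A.updateCol j (fun i => (y i - ((part μ (j : ℕ) + (n - 1 - (j : ℕ)) : ℕ) : ℂ)) * A i j) := by
    intro j
    ext i t
    by_cases ht : t = j
    · subst ht
      rw [Matrix.updateCol_apply, if_pos rfl]
      show ffact (y i) (bump μ (t : ℕ) (t : ℕ) + (n - 1 - (t : ℕ))) = _
      have hexp : bump μ (t : ℕ) (t : ℕ) + (n - 1 - (t : ℕ))
          = (part μ (t : ℕ) + (n - 1 - (t : ℕ))) + 1 := by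
        unfold bump; rw [if_pos rfl]; omega
      rw [hexp, ffact_succ]
      show _ = (y i - _) * ffact (y i) (part μ (t : ℕ) + (n - 1 - (t : ℕ)))
      ring
    · rw [Matrix.updateCol_apply, if_neg ht]
      show ffact (y i) (bump μ (j : ℕ) (t : ℕ) + (n - 1 - (t : ℕ)))
        = ffact (y i) (part μ (t : ℕ) + (n - 1 - (t : ℕ)))
      unfold bump
      rw [if_neg (fun hc => ht (Fin.ext hc))]
  have hdet : ∀ j : Fin n, (Amat n (bump μ (j : ℕ)) x).det
      = (A.updateCol j (fun i => y i * A i j)).det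
        - ((part μ (j : ℕ) + (n - 1 - (j : ℕ)) : ℕ) : ℂ) * A.det := by
    intro j
    rw [hmat j]
    have hcol : (fun i => (y i - ((part μ (j : ℕ) + (n - 1 - (j : ℕ)) : ℕ) : ℂ)) * A i j)
        = (fun i => y i * A i j)
          + (fun i => (-(((part μ (j : ℕ) + (n - 1 - (j : ℕ)) : ℕ) : ℂ))) • A i j) := by
      funext i
      simp only [Pi.add_apply, smul_eq_mul]
      ring
    rw [hcol, Matrix.det_updateCol_add]
    have : (fun i => (-(((part μ (j : ℕ) + (n - 1 - (j : ℕ)) : ℕ) : ℂ))) • A i j)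
        = (-(((part μ (j : ℕ) + (n - 1 - (j : ℕ)) : ℕ) : ℂ))) • (fun i => A i j) := rfl
    rw [this, Matrix.det_updateCol_smul, Matrix.updateCol_eq_self]
    ring
  rw [Finset.sum_congr rfl (fun j _ => hdet j)]
  rw [Finset.sum_sub_distrib, sum_det_updateColumn_mul]
  rw [← Finset.sum_mul]
  have hsump : (∑ j : Fin n, ((part μ (j : ℕ) + (n - 1 - (j : ℕ)) : ℕ) : ℂ))
      = (k : ℂ) + ∑ j : Fin n, ((n - 1 - (j : ℕ) : ℕ) : ℂ) := by
    push_cast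
    rw [Finset.sum_add_distrib]
    congr 1
    rw [← Nat.cast_sum]
    rw [Fin.sum_univ_eq_sum_range (fun j => part μ j) n,
      sum_part μ (le_trans (length_le μ) (by omega))]
  have hsumy : (∑ i, y i) = (∑ i, x i) + ∑ j : Fin n, ((n - 1 - (j : ℕ) : ℕ) : ℂ) := by
    rw [hy, Finset.sum_add_distrib]
  rw [hsump, hsumy]
  ring

lemma coherence {k n : ℕ} (hkn : k < n) (μ : Nat.Partition k) (x : Fin n → ℂ) :
    (∑ Λ : Nat.Partition (k + 1), if IsCover μ Λ then sstar n (part Λ) x else 0)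
      = ((∑ i, x i) - (k : ℂ)) * sstar n (part μ) x := by
  rw [sum_covers μ hkn (fun Λ => sstar n (part Λ) x)]
  have hterm : ∀ j ∈ (Finset.range n).filter (fun j => Addable μ j),
      sstar n (part (addBox μ j)) x = (Amat n (bump μ j) x).det / (Dmat n x).det := by
    intro j hj
    have hb : ∀ t, part (addBox μ j) t = bump μ j t := by
      intro t
      rw [part_addBox μ (Finset.mem_filter.mp hj).2]
      rfl
    rw [sstar_eq, Amat_congr n hb x]
  rw [Finset.sum_congr rfl hterm, ← Finset.sum_div, coherence_det hkn μ x, sstar_eq,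
    mul_div_assoc]

/-! ### Vanishing and nonvanishing -/

lemma sum_fin_restrict {n m : ℕ} (hmn : m ≤ n) (F : Fin n → ℂ)
    (hF : ∀ t : Fin n, m ≤ (t : ℕ) → F t = 0) :
    ∑ t, F t = ∑ s : Fin m, F (Fin.castLE hmn s) := by
  have hmap : ∑ s : Fin m, F (Fin.castLE hmn s) = ∑ s ∈ Finset.univ.map (Fin.castLEEmb hmn), F s := by
    rw [Finset.sum_map]
    rfl
  rw [hmap]
  symm
  apply Finset.sum_subset (Finset.subset_univ _)
  intro t _ ht
  apply hF
  by_contra hlt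
  push_neg at hlt
  exact ht (Finset.mem_map.mpr ⟨⟨t, hlt⟩, Finset.mem_univ _, Fin.ext rfl⟩)

lemma vanishing {n : ℕ} (l ν : Nat.Partition n) (hne : l ≠ ν) :
    (Amat n (part l) (fun i : Fin n => ((part ν (i : ℕ) : ℕ) : ℂ))).det = 0 := by
  classical
  set M := Amat n (part l) (fun i : Fin n => ((part ν (i : ℕ) : ℕ) : ℂ)) with hM
  have hex : ∃ j, part ν j < part l j := by
    by_contra hc
    push_neg at hc
    apply hne
    apply part_injective
    funext j
    rcases Nat.lt_or_ge j n with hj | hj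
    · by_contra hne2
      have hstrict : part l j < part ν j := lt_of_le_of_ne (hc j) hne2
      have h1 : ∑ t ∈ Finset.range n, part l t < ∑ t ∈ Finset.range n, part ν t :=
        Finset.sum_lt_sum (fun t _ => hc t) ⟨j, Finset.mem_range.mpr hj, hstrict⟩
      rw [sum_part l (length_le l), sum_part ν (length_le ν)] at h1
      omega
    · rw [part_eq_zero l (le_trans (length_le l) hj), part_eq_zero ν (le_trans (length_le ν) hj)]
  set j0 := Nat.find hex with hj0
  have hspec : part ν j0 < part l j0 := Nat.find_spec hex
  have hmin : ∀ t, t < j0 → part l t ≤ part ν t := by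
    intro t ht
    have := Nat.find_min hex ht
    omega
  have hj0n : j0 < n := by
    by_contra hc
    have : part l j0 = 0 := part_eq_zero l (le_trans (length_le l) (by omega))
    omega
  have hkey : ∀ (i t : Fin n), j0 ≤ (i : ℕ) → (t : ℕ) ≤ j0 → M i t = 0 := by
    intro i t hi ht
    show ffact (((part ν (i : ℕ) : ℕ) : ℂ) + ((n - 1 - (i : ℕ) : ℕ) : ℂ))
      (part l (t : ℕ) + (n - 1 - (t : ℕ))) = 0
    rw [← Nat.cast_add]
    apply ffact_cast_eq_zero
    have h1 : part ν (i : ℕ) ≤ part ν j0 := part_antitone ν hi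
    have h2 : part l j0 ≤ part l (t : ℕ) := part_antitone l ht
    have h3 : (i : ℕ) < n := i.isLt
    have h4 : (t : ℕ) ≤ j0 := ht
    omega
  have hsub : j0 + 1 ≤ n := by omega
  set P : Matrix (Fin (j0 + 1)) (Fin (j0 + 1)) ℂ :=
    M.submatrix (Fin.castLE hsub) (Fin.castLE hsub) with hP
  have hdetP : P.det = 0 := by
    apply Matrix.det_eq_zero_of_row_eq_zero (⟨j0, by omega⟩ : Fin (j0 + 1))
    intro t
    exact hkey (Fin.castLE hsub ⟨j0, by omega⟩) (Fin.castLE hsub t) le_rfl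
      (Nat.lt_succ_iff.mp t.isLt)
  obtain ⟨v, hv0, hvP⟩ := Matrix.exists_mulVec_eq_zero_iff.mpr hdetP
  rw [← Matrix.exists_mulVec_eq_zero_iff]
  refine ⟨fun t => if h : (t : ℕ) < j0 + 1 then v ⟨t, h⟩ else 0, ?_, ?_⟩
  · obtain ⟨s, hs⟩ := Function.ne_iff.mp hv0
    apply Function.ne_iff.mpr
    refine ⟨Fin.castLE hsub s, ?_⟩
    simp only [Pi.zero_apply]
    rw [dif_pos (show ((Fin.castLE hsub s : Fin n) : ℕ) < j0 + 1 from s.isLt)]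
    convert hs using 2 <;> rfl
  · funext i
    show ∑ t, M i t * _ = 0
    rw [sum_fin_restrict hsub _ (fun t ht => by rw [dif_neg (by omega)]; ring)]
    rcases Nat.lt_or_ge (i : ℕ) (j0 + 1) with hi | hi
    · have hrow := congrFun hvP ⟨(i : ℕ), hi⟩
      rw [Matrix.mulVec, dotProduct, Pi.zero_apply] at hrow
      rw [← hrow]
      apply Finset.sum_congr rfl
      intro s _
      rw [dif_pos (show ((Fin.castLE hsub s : Fin n) : ℕ) < j0 + 1 from s.isLt)]
      rfl
    · apply Finset.sum_eq_zero
      intro s _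
      rw [hkey _ _ (by omega) (by exact Nat.lt_succ_iff.mp s.isLt)]
      ring

lemma sstar_vanish {n : ℕ} (l ν : Nat.Partition n) (hne : l ≠ ν) :
    sstar n (part l) (fun i : Fin n => ((part ν (i : ℕ) : ℕ) : ℂ)) = 0 := by
  rw [sstar_eq, vanishing l ν hne, zero_div]

lemma Dmat_det_ne_zero {n : ℕ} (ν : Nat.Partition n) :
    (Dmat n (fun i : Fin n => ((part ν (i : ℕ) : ℕ) : ℂ))).det ≠ 0 := by
  classical
  set yc : Fin n → ℂ := fun i => ((part ν (i : ℕ) + (n - 1 - (i : ℕ)) : ℕ) : ℂ) with hyc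
  have hD : Dmat n (fun i : Fin n => ((part ν (i : ℕ) : ℕ) : ℂ))
      = Matrix.of (fun i j : Fin n => ffact (yc i) (n - 1 - (j : ℕ))) := by
    unfold Dmat
    ext i j
    simp only [Matrix.of_apply, hyc]
    push_cast
    ring_nf
  rw [hD]
  have hinj : Function.Injective yc := by
    intro a b hab
    simp only [hyc, Nat.cast_inj] at hab
    by_contra hne
    have hv : (a : ℕ) ≠ (b : ℕ) := fun hc => hne (Fin.ext hc)
    rcases Nat.lt_or_ge (a : ℕ) (b : ℕ) with hlt | hge
    · have h1 : part ν (b : ℕ) ≤ part ν (a : ℕ) := part_antitone ν (le_of_lt hlt)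
      have h2 : (b : ℕ) < n := b.isLt
      omega
    · have hlt : (b : ℕ) < (a : ℕ) := by omega
      have h1 : part ν (a : ℕ) ≤ part ν (b : ℕ) := part_antitone ν (le_of_lt hlt)
      have h2 : (a : ℕ) < n := a.isLt
      omega
  set B : Matrix (Fin n) (Fin n) ℂ := Matrix.of (fun i j : Fin n => ffact (yc i) (j : ℕ)) with hB
  have hsub : Matrix.of (fun i j : Fin n => ffact (yc i) (n - 1 - (j : ℕ)))
      = B.submatrix id Fin.revPerm := by
    ext i j
    simp only [Matrix.of_apply, Matrix.submatrix_apply, hB, id]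
    congr 1
    show n - 1 - (j : ℕ) = ((Fin.revPerm j : Fin n) : ℕ)
    rw [show ((Fin.revPerm j : Fin n) : ℕ) = (Fin.rev j : ℕ) from rfl, Fin.val_rev]
    omega
  rw [hsub, Matrix.det_permute']
  have hBdet : B.det = (Matrix.vandermonde yc).det := by
    rw [Matrix.det_eval_matrixOfPolynomials_eq_det_vandermonde yc
      (fun j => ∏ s ∈ Finset.range (j : ℕ), (Polynomial.X - Polynomial.C ((s : ℕ) : ℂ)))
      (fun j => ?_) (fun j => Polynomial.monic_prod_of_monic _ _
        (fun s _ => Polynomial.monic_X_sub_C _))]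
    · congr 1
      ext i j
      simp only [Matrix.of_apply, hB, Polynomial.eval_prod, ffact]
      apply Finset.prod_congr rfl
      intro s _
      simp
    · rw [Polynomial.natDegree_prod _ _ (fun s _ => Polynomial.X_sub_C_ne_zero _),
        Finset.sum_congr rfl (fun s _ => Polynomial.natDegree_X_sub_C _)]
      simp
  rw [hBdet]
  apply mul_ne_zero
  · rcases Int.units_eq_one_or (Equiv.Perm.sign (Fin.revPerm : Equiv.Perm (Fin n))) with h | h <;>
      rw [h] <;> norm_num
  · intro hc
    rw [Matrix.det_vandermonde_eq_zero_iff] at hc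
    obtain ⟨i, j, heq, hnij⟩ := hc
    exact hnij (hinj heq)

lemma parts_partition_zero (μ : Nat.Partition 0) : part μ = fun _ => 0 := by
  have h0 : μ.parts = 0 := by
    by_contra hc
    obtain ⟨a, ha⟩ := Multiset.exists_mem_of_ne_zero hc
    have hpos := μ.parts_pos ha
    have hsum := μ.parts_sum
    have := Multiset.single_le_sum (fun x _ => Nat.zero_le x) a ha
    omega
  funext t
  show (μ.parts.sort (· ≥ ·)).getD t 0 = 0
  rw [h0]
  simp [Multiset.sort_zero]

lemma sstar_partition_zero {n : ℕ} (μ0 : Nat.Partition 0) (ν : Nat.Partition n) :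
    sstar n (part μ0) (fun i : Fin n => ((part ν (i : ℕ) : ℕ) : ℂ)) = 1 := by
  rw [sstar_eq]
  have hAD : Amat n (part μ0) (fun i : Fin n => ((part ν (i : ℕ) : ℕ) : ℂ))
      = Dmat n (fun i : Fin n => ((part ν (i : ℕ) : ℕ) : ℂ)) := by
    unfold Amat Dmat
    ext i j
    simp only [Matrix.of_apply]
    congr 1
    rw [parts_partition_zero μ0]
    simp
  rw [hAD, div_self (Dmat_det_ne_zero ν)]

/-! ### Embedding lemmas -/

lemma embPerm_apply_lt {a b : ℕ} (h : a ≤ b) (σ : Equiv.Perm (Fin a)) (z : Fin a) :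
    embPerm h σ (Fin.castLE h z) = Fin.castLE h (σ z) := by
  rw [embPerm, Equiv.Perm.viaEmbeddingHom_apply]
  exact Equiv.Perm.viaEmbedding_apply σ (Fin.castLEEmb h) z

lemma embPerm_apply_ge {a b : ℕ} (h : a ≤ b) (σ : Equiv.Perm (Fin a)) (x : Fin b)
    (hx : a ≤ (x : ℕ)) : embPerm h σ x = x := by
  rw [embPerm, Equiv.Perm.viaEmbeddingHom_apply]
  apply Equiv.Perm.viaEmbedding_apply_of_notMem
  rintro ⟨z, rfl⟩
  have := z.isLt
  have : (Fin.castLEEmb h z : ℕ) = (z : ℕ) := rfl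
  omega

lemma embPerm_refl {n : ℕ} (h : n ≤ n) (σ : Equiv.Perm (Fin n)) : embPerm h σ = σ := by
  ext x
  have h2 := Equiv.Perm.viaEmbedding_apply σ (Fin.castLEEmb h) x
  rw [embPerm, Equiv.Perm.viaEmbeddingHom_apply]
  calc (σ.viaEmbedding (Fin.castLEEmb h) x : ℕ)
      = (σ.viaEmbedding (Fin.castLEEmb h) (Fin.castLEEmb h x) : ℕ) := by
        congr 1
    _ = (Fin.castLEEmb h (σ x) : ℕ) := by rw [h2]
    _ = (σ x : ℕ) := rfl

lemma embPerm_trans {a b c : ℕ} (h1 : a ≤ b) (h2 : b ≤ c) (h3 : a ≤ c)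
    (σ : Equiv.Perm (Fin a)) :
    embPerm h2 (embPerm h1 σ) = embPerm h3 σ := by
  apply Equiv.ext
  intro x
  rcases Nat.lt_or_ge (x : ℕ) a with hxa | hxa
  · have hxb : (x : ℕ) < b := by omega
    have e1 : embPerm h1 σ (Fin.castLE h1 ⟨(x : ℕ), hxa⟩) = Fin.castLE h1 (σ ⟨(x : ℕ), hxa⟩) :=
      embPerm_apply_lt h1 σ _
    have e2 : embPerm h2 (embPerm h1 σ) (Fin.castLE h2 (Fin.castLE h1 ⟨(x : ℕ), hxa⟩))
        = Fin.castLE h2 (embPerm h1 σ (Fin.castLE h1 ⟨(x : ℕ), hxa⟩)) :=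
      embPerm_apply_lt h2 _ _
    have e3 : embPerm h3 σ (Fin.castLE h3 ⟨(x : ℕ), hxa⟩) = Fin.castLE h3 (σ ⟨(x : ℕ), hxa⟩) :=
      embPerm_apply_lt h3 σ _
    have hx2 : Fin.castLE h2 (Fin.castLE h1 ⟨(x : ℕ), hxa⟩) = x := Fin.ext rfl
    have hx3 : Fin.castLE h3 ⟨(x : ℕ), hxa⟩ = x := Fin.ext rfl
    conv_lhs => rw [← hx2]
    conv_rhs => rw [← hx3]
    rw [e2, e1, e3]
    exact Fin.ext rfl
  · rcases Nat.lt_or_ge (x : ℕ) b with hxb | hxb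
    · have hx2 : Fin.castLE h2 ⟨(x : ℕ), hxb⟩ = x := Fin.ext rfl
      conv_lhs => rw [← hx2]
      rw [embPerm_apply_lt h2, embPerm_apply_ge h1 σ _ hxa, hx2,
        embPerm_apply_ge h3 σ x hxa]
    · rw [embPerm_apply_ge h2 _ x hxb, embPerm_apply_ge h3 σ x hxa]


/-! ### Main argument -/

lemma sum_x {n : ℕ} (ν : Nat.Partition n) :
    (∑ i : Fin n, ((part ν (i : ℕ) : ℕ) : ℂ)) = (n : ℂ) := by
  have h : (∑ i : Fin n, part ν (i : ℕ)) = n := by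
    rw [Fin.sum_univ_eq_sum_range (fun j => part ν j) n]
    exact sum_part ν (length_le ν)
  rw [← Nat.cast_sum, h]

lemma coherence_nu {k n : ℕ} (hkn : k < n) (μ : Nat.Partition k) (ν : Nat.Partition n) :
    (∑ Λ : Nat.Partition (k + 1), if IsCover μ Λ then
        sstar n (part Λ) (fun i : Fin n => ((part ν (i : ℕ) : ℕ) : ℂ)) else 0)
      = ((n : ℂ) - (k : ℂ)) * sstar n (part μ) (fun i : Fin n => ((part ν (i : ℕ) : ℕ) : ℂ)) := by
  rw [coherence hkn μ _]
  congr 2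
  exact show (∑ i, (fun i : Fin n => ((part ν (i : ℕ) : ℕ) : ℂ)) i) = (n : ℂ) from sum_x ν

lemma parts_zero (μ : Nat.Partition 0) : μ.parts = 0 := by
  by_contra hc
  obtain ⟨a, ha⟩ := Multiset.exists_mem_of_ne_zero hc
  have hpos := μ.parts_pos ha
  have hsum := μ.parts_sum
  have := Multiset.single_le_sum (fun x _ => Nat.zero_le x) a ha
  omega

lemma isCover_zero_one : IsCover (default : Nat.Partition 0) (default : Nat.Partition 1) := by
  refine ⟨1, ?_, ?_⟩
  · show 1 ∈ (Nat.Partition.indiscrete 1).parts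
    show (1 : ℕ) ∈ ({1} : Multiset ℕ)
    exact Multiset.mem_singleton_self 1
  · rw [parts_zero]
    show (0 : Multiset ℕ) = Multiset.filter _ ((0 : ℕ) ::ₘ (({1} : Multiset ℕ).erase 1))
    rw [show ({1} : Multiset ℕ).erase 1 = 0 from Multiset.erase_cons_head 1 0]
    rw [Multiset.filter_cons_of_neg _ (by omega)]
    rw [Multiset.filter_zero]

lemma dim_zero (F : SymmIrrepFamily) (p0 : Nat.Partition 0) :
    (F.W 0 p0).character 1 = 1 := by
  rw [Subsingleton.elim p0 (default : Nat.Partition 0)]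
  have hp1 : (default : Nat.Partition 1).parts = Multiset.replicate 1 1 := by
    show (Nat.Partition.indiscrete 1).parts = _
    rw [Multiset.replicate_one]
    rfl
  have hrow := F.row_trivial 1 default hp1
  have hbr := F.branching 0 default 1
  rw [map_one, hrow 1, Fintype.sum_unique, if_pos isCover_zero_one] at hbr
  exact hbr.symm

lemma claim1 (F : SymmIrrepFamily) {n : ℕ} (ν : Nat.Partition n) :
    ∀ k, k ≤ n → ((n.descFactorial k : ℕ) : ℂ)
      = ∑ l : Nat.Partition k, (F.W k l).character 1
          * sstar n (part l) (fun i : Fin n => ((part ν (i : ℕ) : ℕ) : ℂ)) := by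
  intro k
  induction k with
  | zero =>
    intro _
    rw [Fintype.sum_unique, dim_zero F default, sstar_partition_zero default ν]
    simp [Nat.descFactorial_zero]
  | succ k ih =>
    intro hk1
    have hkn : k < n := by omega
    have hIH := ih (by omega)
    have hbranch : ∀ Λ : Nat.Partition (k + 1), (F.W (k + 1) Λ).character 1
        = ∑ l : Nat.Partition k, if IsCover l Λ then (F.W k l).character 1 else 0 := by
      intro Λ
      have hb := F.branching k Λ 1
      rwa [map_one] at hb
    calc ((n.descFactorial (k + 1) : ℕ) : ℂ)
        = ((n : ℂ) - (k : ℂ)) * ((n.descFactorial k : ℕ) : ℂ) := by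
          rw [Nat.descFactorial_succ, Nat.cast_mul, Nat.cast_sub (le_of_lt hkn)]
      _ = ∑ l : Nat.Partition k, (F.W k l).character 1
            * (((n : ℂ) - (k : ℂ)) * sstar n (part l)
                (fun i : Fin n => ((part ν (i : ℕ) : ℕ) : ℂ))) := by
          rw [hIH, Finset.mul_sum]
          apply Finset.sum_congr rfl
          intro l _
          ring
      _ = ∑ l : Nat.Partition k, (F.W k l).character 1
            * (∑ Λ : Nat.Partition (k + 1), if IsCover l Λ then
                sstar n (part Λ) (fun i : Fin n => ((part ν (i : ℕ) : ℕ) : ℂ)) else 0) := by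
          apply Finset.sum_congr rfl
          intro l _
          rw [coherence_nu hkn l ν]
      _ = ∑ l : Nat.Partition k, ∑ Λ : Nat.Partition (k + 1),
            (if IsCover l Λ then (F.W k l).character 1 else 0)
              * sstar n (part Λ) (fun i : Fin n => ((part ν (i : ℕ) : ℕ) : ℂ)) := by
          apply Finset.sum_congr rfl
          intro l _
          rw [Finset.mul_sum]
          apply Finset.sum_congr rfl
          intro Λ _
          by_cases hc : IsCover l Λ
          · rw [if_pos hc, if_pos hc]
          · rw [if_neg hc, if_neg hc, mul_zero, zero_mul]
      _ = ∑ Λ : Nat.Partition (k + 1), (F.W (k + 1) Λ).character 1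
            * sstar n (part Λ) (fun i : Fin n => ((part ν (i : ℕ) : ℕ) : ℂ)) := by
          rw [Finset.sum_comm]
          apply Finset.sum_congr rfl
          intro Λ _
          rw [hbranch Λ, Finset.sum_mul]

lemma dim_formula (F : SymmIrrepFamily) {n : ℕ} (ν : Nat.Partition n) :
    ((n.factorial : ℕ) : ℂ) = (F.W n ν).character 1
      * sstar n (part ν) (fun i : Fin n => ((part ν (i : ℕ) : ℕ) : ℂ)) := by
  have h := claim1 F ν n le_rfl
  rw [Nat.descFactorial_self] at h
  rw [h]
  apply Finset.sum_eq_single_of_mem ν (Finset.mem_univ ν)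
  intro l _ hl
  rw [sstar_vanish l ν hl, mul_zero]

lemma char_one_ne_zero (F : SymmIrrepFamily) {n : ℕ} (ν : Nat.Partition n) :
    (F.W n ν).character 1 ≠ 0 := by
  intro hc
  have h := dim_formula F ν
  rw [hc, zero_mul] at h
  exact absurd h (Nat.cast_ne_zero.mpr (Nat.factorial_ne_zero n))

lemma main_aux (F : SymmIrrepFamily) {n : ℕ} (ν : Nat.Partition n) :
    ∀ d k (hkd : k + d = n) (μ : Equiv.Perm (Fin k)),
      normChar F (show k ≤ n by omega) ν μ
        = ∑ l : Nat.Partition k, (F.W k l).character μ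
            * sstar n (part l) (fun i : Fin n => ((part ν (i : ℕ) : ℕ) : ℂ)) := by
  intro d
  induction d with
  | zero =>
    intro k hkd μ
    have hk : k = n := by omega
    subst hk
    rw [Finset.sum_eq_single_of_mem ν (Finset.mem_univ ν)
      (fun l _ hl => by rw [sstar_vanish l ν hl, mul_zero])]
    show ((k.descFactorial k : ℕ) : ℂ) * (F.W k ν).character (embPerm _ μ)
        / (F.W k ν).character 1 = _
    rw [embPerm_refl _ μ, div_eq_iff (char_one_ne_zero F ν), Nat.descFactorial_self,
      dim_formula F ν]
    ring
  | succ d ih =>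
    intro k hkd μ
    have hkn : k < n := by omega
    have hstep := ih (k + 1) (by omega) (embPerm (Nat.le_succ k) μ)
    rw [normChar] at hstep
    rw [embPerm_trans (Nat.le_succ k) (show k + 1 ≤ n by omega) (show k ≤ n by omega) μ]
      at hstep
    have hbr : ∀ Λ : Nat.Partition (k + 1),
        (F.W (k + 1) Λ).character (embPerm (Nat.le_succ k) μ)
          = ∑ l : Nat.Partition k, if IsCover l Λ then (F.W k l).character μ else 0 :=
      fun Λ => F.branching k Λ μ
    have hRHS : (∑ Λ : Nat.Partition (k + 1),
          (F.W (k + 1) Λ).character (embPerm (Nat.le_succ k) μ)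
          * sstar n (part Λ) (fun i : Fin n => ((part ν (i : ℕ) : ℕ) : ℂ)))
        = ((n : ℂ) - (k : ℂ)) * ∑ l : Nat.Partition k, (F.W k l).character μ
            * sstar n (part l) (fun i : Fin n => ((part ν (i : ℕ) : ℕ) : ℂ)) := by
      calc (∑ Λ : Nat.Partition (k + 1),
          (F.W (k + 1) Λ).character (embPerm (Nat.le_succ k) μ)
          * sstar n (part Λ) (fun i : Fin n => ((part ν (i : ℕ) : ℕ) : ℂ)))
          = ∑ Λ : Nat.Partition (k + 1), ∑ l : Nat.Partition k,
              (if IsCover l Λ then (F.W k l).character μ else 0)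
              * sstar n (part Λ) (fun i : Fin n => ((part ν (i : ℕ) : ℕ) : ℂ)) := by
            apply Finset.sum_congr rfl
            intro Λ _
            rw [hbr Λ, Finset.sum_mul]
        _ = ∑ l : Nat.Partition k, (F.W k l).character μ
              * (∑ Λ : Nat.Partition (k + 1), if IsCover l Λ then
                  sstar n (part Λ) (fun i : Fin n => ((part ν (i : ℕ) : ℕ) : ℂ)) else 0) := by
            rw [Finset.sum_comm]
            apply Finset.sum_congr rfl
            intro l _
            rw [Finset.mul_sum]
            apply Finset.sum_congr rfl
            intro Λ _
            by_cases hc : IsCover l Λ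
            · rw [if_pos hc, if_pos hc]
            · rw [if_neg hc, if_neg hc, mul_zero, zero_mul]
        _ = ((n : ℂ) - (k : ℂ)) * ∑ l : Nat.Partition k, (F.W k l).character μ
              * sstar n (part l) (fun i : Fin n => ((part ν (i : ℕ) : ℕ) : ℂ)) := by
            rw [Finset.mul_sum]
            apply Finset.sum_congr rfl
            intro l _
            rw [coherence_nu hkn l ν]
            ring
    rw [hRHS] at hstep
    have hfact : ((n.descFactorial (k + 1) : ℕ) : ℂ)
        = ((n : ℂ) - (k : ℂ)) * ((n.descFactorial k : ℕ) : ℂ) := by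
      rw [Nat.descFactorial_succ, Nat.cast_mul, Nat.cast_sub (le_of_lt hkn)]
    rw [hfact] at hstep
    have hnk : ((n : ℂ) - (k : ℂ)) ≠ 0 := by
      have h1 : ((n - k : ℕ) : ℂ) ≠ 0 := Nat.cast_ne_zero.mpr (by omega)
      rwa [Nat.cast_sub (le_of_lt hkn)] at h1
    apply mul_left_cancel₀ hnk
    rw [← hstep, normChar]
    ring

end OO

/-- **Okounkov–Olshanski.** For `k ≤ n`, `μ ∈ S(k)` and `ν ⊢ n`:
`χ̂_ν(μ) = ∑_{λ ⊢ k} χ_λ(μ) s*_λ(ν)`. -/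
theorem stmt_9 (F : SymmIrrepFamily) {k n : ℕ} (h : k ≤ n) (μ : Equiv.Perm (Fin k))
    (ν : Nat.Partition n) :
    normChar F h ν μ
      = ∑ l : Nat.Partition k,
          (F.W k l).character μ *
            sstar n (part l) (fun i : Fin n => ((part ν (i : ℕ) : ℕ) : ℂ)) := by
  exact OO.main_aux F ν (n - k) k (by omega) μ
end
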